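/- In the Newcomb-with-looking environment with ε = 0.01: (i) the two-step causal values from the empty history of the six policies — curious one-boxer, curious two-boxer, incurious one-boxer, incurious two-boxer, paradox-lover, fatalistic — are V^{cau} = 500000, 501000, 500000, 501000, 500500, 500500 respectively, so both two-boxing policies maximize the causal value; (ii) after looking into the box, evidential agents two-box: V^{aev,B₂}_{μ,1}(LF) = 1001000 > 1000000 = V^{aev,B₁}_{μ,1}(LF) and V^{aev,B₂}_{μ,1}(LE) = 1000 > 0 = V^{aev,B₁}_{μ,1}(LE), so the curious one-boxer is not a time-consistent policy for SAEDT or SPEDT. -/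

import Mathlib

/-! # A framework for physicalistic sequential decision making

Following Everitt, Leike, Hutter, "Sequential Extensions of Causal and
Evidential Decision Theory".

An environment model `μ` over hidden states `S`, actions `A`, percepts `E`
with lifetime `m` is given in causally factored form
`μ(s, æ_{1:m}) = μ(s) ∏_i μ(a_i | s, æ_{<i}) μ(e_i | s, æ_{<i} a_i)`.
Histories are lists of action-percept pairs. -/

noncomputable section

variable {S A E : Type*}

/-- The product `∏ μ(a_i | s, æ_{<i}) μ(e_i | s, æ_{<i}a_i)` of the factors along the
continuation `rest` of the history-prefix `pre`. -/
def wSuf (pa : S → List (A × E) → A → ℝ) (pe : S → List (A × E) → A → E → ℝ)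
    (s : S) : List (A × E) → List (A × E) → ℝ
  | _, [] => 1
  | pre, (a, e) :: rest => pa s pre a * pe s pre a e * wSuf pa pe s (pre ++ [(a, e)]) rest

/-- A physicalistic environment model with lifetime `m`: a prior pmf on the hidden state,
together with conditional pmfs for the action and the percept at every time step
(i.e. after every history of length `< m`), which is action-positive. -/
structure Env (S A E : Type*) [Fintype S] [Fintype A] [Fintype E] (m : ℕ) where
  /-- the prior `μ(s)` over the hidden state -/
  prior : S → ℝ
  /-- the action factor `μ(a_t | s, æ_{<t})` -/
  pa : S → List (A × E) → A → ℝ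
  /-- the percept factor `μ(e_t | s, æ_{<t}a_t)` -/
  pe : S → List (A × E) → A → E → ℝ
  prior_nonneg : ∀ s, 0 ≤ prior s
  prior_sum : ∑ s, prior s = 1
  pa_nonneg : ∀ s h a, 0 ≤ pa s h a
  pa_sum : ∀ s (h : List (A × E)), h.length < m → ∑ a, pa s h a = 1
  pe_nonneg : ∀ s h a e, 0 ≤ pe s h a e
  pe_sum : ∀ s (h : List (A × E)) (a : A), h.length < m → ∑ e, pe s h a e = 1
  /-- action-positivity: `μ(æ_{<t} | s) > 0` implies `μ(a_t | s, æ_{<t}) > 0` -/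
  action_pos : ∀ s (h : List (A × E)) (a : A), h.length < m →
    0 < wSuf pa pe s [] h → 0 < pa s h a

variable [Fintype S] [Fintype A] [Fintype E] {m : ℕ}

/-- Event: the trajectory `τ = æ_{1:m}` extends the history `h = æ_{<t}`. -/
def ExtendsH (h : List (A × E)) (τ : Fin m → A × E) : Prop :=
  (List.ofFn τ).take h.length = h

/-- Event: the actions of the trajectory `τ` from (0-based) time `t0` on follow
the deterministic policy `π`. -/
def FollowsFrom (π : List (A × E) → A) (t0 : ℕ) (τ : Fin m → A × E) : Prop :=
  ∀ i : Fin m, t0 ≤ (i : ℕ) → (τ i).1 = π ((List.ofFn τ).take (i : ℕ))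

/-- Event: the action at (0-based) time `k` is `a`. -/
def ActAt (k : ℕ) (a : A) (τ : Fin m → A × E) : Prop :=
  ∀ hk : k < m, (τ ⟨k, hk⟩).1 = a

/-- Event: the percept at (0-based) time `k` is `e`. -/
def PerAt (k : ℕ) (e : E) (τ : Fin m → A × E) : Prop :=
  ∀ hk : k < m, (τ ⟨k, hk⟩).2 = e

namespace Env

/-- The joint probability `μ(s, æ_{<t})`, given directly by the causal factorization. -/
def hw (μ : Env S A E m) (s : S) (h : List (A × E)) : ℝ :=
  μ.prior s * wSuf μ.pa μ.pe s [] h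

/-- The marginal probability `μ(æ_{<t})` of a history. -/
def probH (μ : Env S A E m) (h : List (A × E)) : ℝ := ∑ s, μ.hw s h

/-- The probability `μ(æ_{<t}a_t)` of a history followed by an action. -/
def probHA (μ : Env S A E m) (h : List (A × E)) (a : A) : ℝ :=
  ∑ s, μ.hw s h * μ.pa s h a

/-- The action-evidential conditional `μ(e_t | æ_{<t}a_t)`. -/
def condE (μ : Env S A E m) (h : List (A × E)) (a : A) (e : E) : ℝ :=
  μ.probH (h ++ [(a, e)]) / μ.probHA h a

/-- The posterior `μ(s | æ_{<t})` over the hidden state. -/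
def condS (μ : Env S A E m) (s : S) (h : List (A × E)) : ℝ :=
  μ.hw s h / μ.probH h

/-- The posterior `μ(s | æ_{<t}a_t)` over the hidden state, also conditioning on `a_t`. -/
def condSA (μ : Env S A E m) (s : S) (h : List (A × E)) (a : A) : ℝ :=
  μ.hw s h * μ.pa s h a / μ.probHA h a

/-- The conditional `μ(e_t | s, æ_{<t}a_t)` given the hidden state. -/
def condESA (μ : Env S A E m) (s : S) (h : List (A × E)) (a : A) (e : E) : ℝ :=
  μ.hw s (h ++ [(a, e)]) / (μ.hw s h * μ.pa s h a)

/-! ## Causal interventions -/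

/-- The intervened joint `μ(s, æ_{<t}, e_t | do(a_t := b))`: the action factor at time `t`
is deleted and `a_t` is substituted by `b`. -/
def doJoint (μ : Env S A E m) (s : S) (h : List (A × E)) (b : A) (e : E) : ℝ :=
  μ.hw s h * μ.pe s h b e

/-- `μ(æ_{<t}, e_t | do(a_t := b))`, marginalizing the hidden state. -/
def doNum (μ : Env S A E m) (h : List (A × E)) (b : A) (e : E) : ℝ :=
  ∑ s, μ.doJoint s h b e

/-- `μ(æ_{<t} | do(a_t := b))`, marginalizing the hidden state and the percept `e_t`. -/
def doDen (μ : Env S A E m) (h : List (A × E)) (b : A) : ℝ :=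
  ∑ e, μ.doNum h b e

/-- The causal conditional `μ(e_t | æ_{<t}, do(a_t := b))`. -/
def condDo (μ : Env S A E m) (h : List (A × E)) (b : A) (e : E) : ℝ :=
  μ.doNum h b e / μ.doDen h b

/-- Product of the percept factors along the percepts `es`, all action factors being
deleted and the actions substituted according to the policy `π`:
the intervened conditional `μ(e_{t:k} | s, æ_{<t}, do(a_t := π(æ_{<t}), …))`. -/
def doPE (μ : Env S A E m) (π : List (A × E) → A) (s : S) :
    List (A × E) → List E → ℝ
  | _, [] => 1
  | h, e :: es => μ.pe s h (π h) e * μ.doPE π s (h ++ [(π h, e)]) es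

/-- `μ(æ_{<t}, e_{t:k} | do(a_t := π(æ_{<t}), …, a_m := π(æ_{<m})))` where the percepts
`e_{t:k}` are given by the list `es`. -/
def doPolNum (μ : Env S A E m) (π : List (A × E) → A) (h : List (A × E))
    (es : List E) : ℝ :=
  ∑ s, μ.hw s h * μ.doPE π s h es

/-- `μ(æ_{<t} | do(a_t := π(æ_{<t}), …, a_m := π(æ_{<m})))`, marginalizing all the
intervened percepts `e_{t:m}`. -/
def doPolDen (μ : Env S A E m) (π : List (A × E) → A) (h : List (A × E)) : ℝ :=
  ∑ es : Fin (m - h.length) → E, μ.doPolNum π h (List.ofFn es)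

/-! ## Probabilities of trajectory events -/

open Classical in
/-- The probability of an event `Q` over full trajectories `æ_{1:m}`. -/
def evP (μ : Env S A E m) (Q : (Fin m → A × E) → Prop) : ℝ :=
  ∑ τ : Fin m → A × E, if Q τ then μ.probH (List.ofFn τ) else 0

open Classical in
/-- The joint probability of the hidden state `s` and an event `Q` over full
trajectories `æ_{1:m}`. -/
def evPS (μ : Env S A E m) (s : S) (Q : (Fin m → A × E) → Prop) : ℝ :=
  ∑ τ : Fin m → A × E, if Q τ then μ.hw s (List.ofFn τ) else 0

/-- The policy-evidential conditional `μ(e_t | æ_{<t}, π_{t:m})`, conditioning on the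
event that the history extends `æ_{<t}` and the actions from time `t` to `m` follow `π`. -/
def condPev (μ : Env S A E m) (π : List (A × E) → A) (h : List (A × E)) (e : E) : ℝ :=
  μ.evP (fun τ => ExtendsH h τ ∧ FollowsFrom π h.length τ ∧ PerAt h.length e τ) /
    μ.evP (fun τ => ExtendsH h τ ∧ FollowsFrom π h.length τ)

/-- The posterior `μ(s | æ_{<t}, π_{t:m})` over the hidden state given the policy event. -/
def condSPev (μ : Env S A E m) (π : List (A × E) → A) (s : S) (h : List (A × E)) : ℝ :=
  μ.evPS s (fun τ => ExtendsH h τ ∧ FollowsFrom π h.length τ) /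
    μ.evP (fun τ => ExtendsH h τ ∧ FollowsFrom π h.length τ)

/-- The conditional `μ(e_t | s, æ_{<t}, π_{t:m})` given the hidden state and the
policy event. -/
def condESPev (μ : Env S A E m) (π : List (A × E) → A) (s : S) (h : List (A × E))
    (e : E) : ℝ :=
  μ.evPS s (fun τ => ExtendsH h τ ∧ FollowsFrom π h.length τ ∧ PerAt h.length e τ) /
    μ.evPS s (fun τ => ExtendsH h τ ∧ FollowsFrom π h.length τ)

/-- The conditional `μ(e_t | æ_{<t}a_t, π_{t+1:m})` used in the recursive definition of
the policy-evidential value. -/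
def condPevA (μ : Env S A E m) (π : List (A × E) → A) (h : List (A × E)) (a : A)
    (e : E) : ℝ :=
  μ.evP (fun τ => ExtendsH (h ++ [(a, e)]) τ ∧ FollowsFrom π (h.length + 1) τ) /
    μ.evP (fun τ => ExtendsH h τ ∧ ActAt h.length a τ ∧ FollowsFrom π (h.length + 1) τ)

/-! ## Value functions

The recursions are driven by the fuel `n`, the number of remaining time steps: the
value of a history `æ_{<t}` (for `t ≤ m + 1`) or of `æ_{<t}a_t` (for `t ≤ m`) within
lifetime `m` uses fuel `n = m - (t - 1)`, and the value is `0` for `t > m`. -/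

/-- The action-evidential value `V^{aev,π}_{μ}(æ_{<t}a_t)` (with `n = m - t + 1`):
`V^{aev,π}(æ_{<t}a_t) = ∑_{e_t} μ(e_t | æ_{<t}a_t) (u(e_t) + V^{aev,π}(æ_{<t}a_te_t))`. -/
def VaevA (μ : Env S A E m) (u : E → ℝ) (π : List (A × E) → A) :
    ℕ → List (A × E) → A → ℝ
  | 0, _, _ => 0
  | n + 1, h, a =>
    ∑ e, μ.condE h a e * (u e + μ.VaevA u π n (h ++ [(a, e)]) (π (h ++ [(a, e)])))

/-- The action-evidential value of a history, `V^{aev,π}(æ_{<t}) = V^{aev,π}(æ_{<t}π(æ_{<t}))`. -/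
def Vaev (μ : Env S A E m) (u : E → ℝ) (π : List (A × E) → A) (n : ℕ)
    (h : List (A × E)) : ℝ :=
  μ.VaevA u π n h (π h)

/-- The policy-evidential value `V^{pev,π}_{μ}(æ_{<t}a_t)` (with `n = m - t + 1`):
`V^{pev,π}(æ_{<t}a_t) = ∑_{e_t} μ(e_t | æ_{<t}a_t, π_{t+1:m}) (u(e_t) + V^{pev,π}(æ_{<t}a_te_t))`. -/
def VpevA (μ : Env S A E m) (u : E → ℝ) (π : List (A × E) → A) :
    ℕ → List (A × E) → A → ℝ
  | 0, _, _ => 0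
  | n + 1, h, a =>
    ∑ e, μ.condPevA π h a e * (u e + μ.VpevA u π n (h ++ [(a, e)]) (π (h ++ [(a, e)])))

/-- The policy-evidential value of a history. -/
def Vpev (μ : Env S A E m) (u : E → ℝ) (π : List (A × E) → A) (n : ℕ)
    (h : List (A × E)) : ℝ :=
  μ.VpevA u π n h (π h)

/-- The causal value `V^{cau,π}_{μ}(æ_{<t}a_t)` (with `n = m - t + 1`):
`V^{cau,π}(æ_{<t}a_t) = ∑_{e_t} μ(e_t | æ_{<t}, do(a_t)) (u(e_t) + V^{cau,π}(æ_{<t}a_te_t))`. -/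
def VcauA (μ : Env S A E m) (u : E → ℝ) (π : List (A × E) → A) :
    ℕ → List (A × E) → A → ℝ
  | 0, _, _ => 0
  | n + 1, h, a =>
    ∑ e, μ.condDo h a e * (u e + μ.VcauA u π n (h ++ [(a, e)]) (π (h ++ [(a, e)])))

/-- The causal value of a history. -/
def Vcau (μ : Env S A E m) (u : E → ℝ) (π : List (A × E) → A) (n : ℕ)
    (h : List (A × E)) : ℝ :=
  μ.VcauA u π n h (π h)

/-! ## Products of one-step conditionals, for the iterative forms -/

/-- `∏_{i=t}^{k} μ(e_i | æ_{<i}a_i)` with `a_i := π(æ_{<i})`, the percepts `e_{t:k}`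
being given by the list `es`. -/
def prodAev (μ : Env S A E m) (π : List (A × E) → A) : List (A × E) → List E → ℝ
  | _, [] => 1
  | h, e :: es => μ.condE h (π h) e * μ.prodAev π (h ++ [(π h, e)]) es

/-- `∏_{i=t}^{k} μ(e_i | æ_{<i}, π_{i:m})`. -/
def prodPev (μ : Env S A E m) (π : List (A × E) → A) : List (A × E) → List E → ℝ
  | _, [] => 1
  | h, e :: es => μ.condPev π h e * μ.prodPev π (h ++ [(π h, e)]) es

/-- `∏_{i=t}^{k} μ(e_i | æ_{<i}, do(a_i))` with `a_i := π(æ_{<i})`. -/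
def prodCau (μ : Env S A E m) (π : List (A × E) → A) : List (A × E) → List E → ℝ
  | _, [] => 1
  | h, e :: es => μ.condDo h (π h) e * μ.prodCau π (h ++ [(π h, e)]) es

/-- `∏_{i=t}^{k} ∑_{s} μ(s | æ_{<i}) μ(e_i | s, æ_{<i}a_i)` with `a_i := π(æ_{<i})`. -/
def prodCauX (μ : Env S A E m) (π : List (A × E) → A) : List (A × E) → List E → ℝ
  | _, [] => 1
  | h, e :: es =>
    (∑ s, μ.condS s h * μ.condESA s h (π h) e) * μ.prodCauX π (h ++ [(π h, e)]) es

end Env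

end

/-! ## The Newcomb-with-looking environment (lifetime m = 2, ε = 0.01)

Hidden states `E` (opaque box empty) / `F` (full), prior 1/2 each. At step 1 the agent
looks into the box (`L := B₁`) or not (`N := B₂`), each with probability 1/2; looking
deterministically reveals the hidden state (percept `pE` or `pF`), not looking yields
percept `p0`; these percepts have utility 0. At step 2 the agent one-boxes (`B₁`) or
two-boxes (`B₂`); the predictor has accuracy `1 - ε = 0.99`:
`μ(B₁ | F, æ₁) = 0.99` and `μ(B₁ | E, æ₁) = 0.01`. The final percept is deterministic
with utilities 0 for `(E, B₁)`, 1000 for `(E, B₂)`, 1000000 for `(F, B₁)` and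
1001000 for `(F, B₂)`. -/

/-- Hidden states: opaque box empty (`E`) or full (`F`). -/
inductive LSt | E | F
  deriving DecidableEq

instance : Fintype LSt := ⟨{LSt.E, LSt.F}, fun x => by cases x <;> decide⟩

/-- Actions: `B₁` (step 1: look; step 2: one-box), `B₂` (step 1: not look;
step 2: two-box). -/
inductive LAct | B₁ | B₂
  deriving DecidableEq

instance : Fintype LAct := ⟨{LAct.B₁, LAct.B₂}, fun x => by cases x <;> decide⟩

/-- Percepts: box revealed empty (`pE`), box revealed full (`pF`), nothing seen (`p0`),
and the four payoffs. -/
inductive LPer | pE | pF | p0 | O0 | OT | OM | OMT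
  deriving DecidableEq

instance : Fintype LPer :=
  ⟨{LPer.pE, LPer.pF, LPer.p0, LPer.O0, LPer.OT, LPer.OM, LPer.OMT}, fun x => by cases x <;> decide⟩

/-- The action factors `μ(a_t | s, æ_{<t})`: uniform at step 1, prediction accuracy
`1 - ε = 0.99` at step 2. -/
noncomputable def nlPa : LSt → List (LAct × LPer) → LAct → ℝ
  | _, [], _ => 1 / 2
  | LSt.F, _, LAct.B₁ => 0.99
  | LSt.F, _, LAct.B₂ => 0.01
  | LSt.E, _, LAct.B₁ => 0.01
  | LSt.E, _, LAct.B₂ => 0.99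

/-- The percept factors `μ(e_t | s, æ_{<t}a_t)`: looking reveals the hidden state,
the step-2 percept is the payoff determined by the hidden state and the action. -/
noncomputable def nlPe : LSt → List (LAct × LPer) → LAct → LPer → ℝ
  | LSt.E, [], LAct.B₁, LPer.pE => 1
  | LSt.E, [], LAct.B₁, _ => 0
  | LSt.F, [], LAct.B₁, LPer.pF => 1
  | LSt.F, [], LAct.B₁, _ => 0
  | _, [], LAct.B₂, LPer.p0 => 1
  | _, [], LAct.B₂, _ => 0
  | LSt.E, _, LAct.B₁, LPer.O0 => 1
  | LSt.E, _, LAct.B₂, LPer.OT => 1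
  | LSt.F, _, LAct.B₁, LPer.OM => 1
  | LSt.F, _, LAct.B₂, LPer.OMT => 1
  | _, _, _, _ => 0

/-- The Newcomb-with-looking environment model, lifetime `m = 2`. -/
noncomputable def nlEnv : Env LSt LAct LPer 2 where
  prior := fun _ => 1 / 2
  pa := nlPa
  pe := nlPe
  prior_nonneg := by intro s; norm_num
  prior_sum := by
    rw [show (Finset.univ : Finset LSt) = {LSt.E, LSt.F} by decide,
      Finset.sum_insert (by decide), Finset.sum_singleton]
    norm_num
  pa_nonneg := by intro s h a; unfold nlPa; split <;> norm_num
  pa_sum := by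
    intro s h hlen
    rw [show (Finset.univ : Finset LAct) = {LAct.B₁, LAct.B₂} by decide,
      Finset.sum_insert (by decide), Finset.sum_singleton]
    rcases h with _ | ⟨⟨a1, e1⟩, _ | ⟨p, t⟩⟩
    · cases s <;> norm_num [nlPa]
    · cases s <;> cases a1 <;> cases e1 <;> norm_num [nlPa]
    · simp only [List.length_cons] at hlen; omega
  pe_nonneg := by intro s h a e; unfold nlPe; split <;> norm_num
  pe_sum := by
    intro s h a hlen
    rw [show (Finset.univ : Finset LPer) =
        {LPer.pE, LPer.pF, LPer.p0, LPer.O0, LPer.OT, LPer.OM, LPer.OMT} by decide,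
      Finset.sum_insert (by decide), Finset.sum_insert (by decide),
      Finset.sum_insert (by decide), Finset.sum_insert (by decide),
      Finset.sum_insert (by decide), Finset.sum_insert (by decide),
      Finset.sum_singleton]
    rcases h with _ | ⟨⟨a1, e1⟩, _ | ⟨p, t⟩⟩
    · cases s <;> cases a <;> norm_num [nlPe]
    · cases s <;> cases a <;> cases a1 <;> cases e1 <;> norm_num [nlPe]
    · simp only [List.length_cons] at hlen; omega
  action_pos := by
    intro s h a hlen hpos
    unfold nlPa; split <;> norm_num

/-- The utility function of the Newcomb-with-looking problem. -/
noncomputable def nlU : LPer → ℝ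
  | LPer.pE => 0
  | LPer.pF => 0
  | LPer.p0 => 0
  | LPer.O0 => 0
  | LPer.OT => 1000
  | LPer.OM => 1000000
  | LPer.OMT => 1001000

/-- The curious one-boxer: look, then always one-box. -/
def nlCur1 : List (LAct × LPer) → LAct := fun _ => LAct.B₁

/-- The curious two-boxer: look, then always two-box. -/
def nlCur2 : List (LAct × LPer) → LAct
  | [] => LAct.B₁
  | _ => LAct.B₂

/-- The incurious one-boxer: don't look, then one-box. -/
def nlInc1 : List (LAct × LPer) → LAct
  | [] => LAct.B₂
  | _ => LAct.B₁

/-- The incurious two-boxer: don't look, then two-box. -/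
def nlInc2 : List (LAct × LPer) → LAct := fun _ => LAct.B₂

/-- The paradox-lover: look, then one-box iff the box is empty. -/
def nlPara : List (LAct × LPer) → LAct
  | [] => LAct.B₁
  | [(_, LPer.pE)] => LAct.B₁
  | _ => LAct.B₂

/-- The fatalistic policy: look, then one-box iff the box is full. -/
def nlFatal : List (LAct × LPer) → LAct
  | [] => LAct.B₁
  | [(_, LPer.pF)] => LAct.B₁
  | _ => LAct.B₂

/-! Causally, the box content is fixed when the agent acts: the value of the second action is the
posterior-weighted payoff, and two-boxing adds 1000 in every hidden state. Looking splits the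
prior into the two revealed states, not looking keeps it at 1/2, so the value from the empty
history only depends on how often the policy two-boxes.

Evidentially, after looking the posterior is a point mass, so the second action carries no further
evidence about the box and two-boxing is again better by 1000. At the last step the
policy-evidential conditional coincides with the action-evidential one, as no later actions remain
to condition on. -/

theorem List.ofFn_eq_iff_eq_getElem {α : Type*} {l : List α} {f : Fin l.length → α} :
    List.ofFn f = l ↔ f = fun i => l[i] := by
  rw [← List.ofFn_inj]
  simp only [Fin.getElem_fin, List.ofFn_getElem]

theorem List.ofFn_snoc {α : Type*} {n : ℕ} (f : Fin n → α) (x : α) :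
    List.ofFn (Fin.snoc f x : Fin (n + 1) → α) = List.ofFn f ++ [x] := by
  rw [List.ofFn_succ_last]
  simp

theorem wSuf_append_singleton {S A E : Type*} (pa : S → List (A × E) → A → ℝ)
    (pe : S → List (A × E) → A → E → ℝ) (s : S) (pre l : List (A × E)) (a : A) (e : E) :
    wSuf pa pe s pre (l ++ [(a, e)]) =
      wSuf pa pe s pre l * (pa s (pre ++ l) a * pe s (pre ++ l) a e) := by
  induction l generalizing pre with
  | nil => simp [wSuf]
  | cons x l ih =>
    obtain ⟨b, f⟩ := x
    simp only [List.cons_append, wSuf, ih, List.append_assoc, List.nil_append]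
    ring

namespace Env

variable {S A E : Type*} [Fintype S] [Fintype A] [Fintype E] {m : ℕ} (μ : Env S A E m)

theorem hw_append_singleton (s : S) (h : List (A × E)) (a : A) (e : E) :
    μ.hw s (h ++ [(a, e)]) = μ.hw s h * μ.pa s h a * μ.pe s h a e := by
  simp only [hw, wSuf_append_singleton, List.nil_append]
  ring

theorem sum_probH_append_singleton {h : List (A × E)} (hlen : h.length < m) (a : A) :
    ∑ e, μ.probH (h ++ [(a, e)]) = μ.probHA h a := by
  simp only [probH, probHA, hw_append_singleton]
  rw [Finset.sum_comm]
  refine Finset.sum_congr rfl fun s _ => ?_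
  rw [← Finset.mul_sum, μ.pe_sum s h a hlen, mul_one]

theorem condDo_eq_sum_condS_mul_pe {h : List (A × E)} (hlen : h.length < m) (b : A) (e : E) :
    μ.condDo h b e = ∑ s, μ.condS s h * μ.pe s h b e := by
  have hden : μ.doDen h b = μ.probH h := by
    simp only [doDen, doNum, doJoint, probH]
    rw [Finset.sum_comm]
    refine Finset.sum_congr rfl fun s _ => ?_
    rw [← Finset.mul_sum, μ.pe_sum s h b hlen, mul_one]
  simp only [condDo, hden, doNum, doJoint, condS, Finset.sum_div, div_mul_eq_mul_div]

theorem VcauA_one {h : List (A × E)} (hlen : h.length < m) (u : E → ℝ)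
    (π : List (A × E) → A) (a : A) :
    μ.VcauA u π 1 h a = ∑ s, μ.condS s h * ∑ e, μ.pe s h a e * u e := by
  simp only [VcauA, add_zero, μ.condDo_eq_sum_condS_mul_pe hlen, Finset.sum_mul,
    Finset.mul_sum, mul_assoc]
  exact Finset.sum_comm

theorem condE_eq_pe_of_hw_eq_zero {h : List (A × E)} {a : A} {s₀ : S}
    (hs₀ : ∀ s ≠ s₀, μ.hw s h = 0) (hpos : μ.hw s₀ h * μ.pa s₀ h a ≠ 0) (e : E) :
    μ.condE h a e = μ.pe s₀ h a e := by
  have hprobH : μ.probH (h ++ [(a, e)]) = μ.hw s₀ h * μ.pa s₀ h a * μ.pe s₀ h a e := by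
    rw [probH, Fintype.sum_eq_single s₀ fun s hs => by rw [hw_append_singleton, hs₀ s hs]; ring,
      hw_append_singleton]
  have hprobHA : μ.probHA h a = μ.hw s₀ h * μ.pa s₀ h a :=
    Fintype.sum_eq_single s₀ fun s hs => by rw [hs₀ s hs, zero_mul]
  rw [condE, hprobH, hprobHA, mul_div_cancel_left₀ _ hpos]

theorem VaevA_one_eq_of_hw_eq_zero {h : List (A × E)} {a : A} {s₀ : S}
    (hs₀ : ∀ s ≠ s₀, μ.hw s h = 0) (hpos : μ.hw s₀ h * μ.pa s₀ h a ≠ 0) (u : E → ℝ)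
    (π : List (A × E) → A) :
    μ.VaevA u π 1 h a = ∑ e, μ.pe s₀ h a e * u e := by
  simp only [VaevA, add_zero, μ.condE_eq_pe_of_hw_eq_zero hs₀ hpos]

open Classical in
theorem evP_eq_sum_snoc {n : ℕ} (μ : Env S A E (n + 1)) (Q : (Fin (n + 1) → A × E) → Prop) :
    μ.evP Q = ∑ x, ∑ f : Fin n → A × E,
      if Q (Fin.snoc f x) then μ.probH (List.ofFn f ++ [x]) else 0 := by
  rw [evP, ← (Fin.snocEquiv fun _ => A × E).sum_comp, Fintype.sum_prod_type]
  simp only [Fin.snocEquiv, Equiv.coe_fn_mk, List.ofFn_snoc]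

theorem condPevA_eq_condE_of_length_succ {h : List (A × E)}
    (hm : h.length + 1 = m) (π : List (A × E) → A) (a : A) (e : E) :
    μ.condPevA π h a e = μ.condE h a e := by
  subst hm
  -- stated as `↔ True`, since `simp` would unfold a bare `FollowsFrom` hypothesis into its body
  have hfollows : ∀ τ : Fin (h.length + 1) → A × E, FollowsFrom π (h.length + 1) τ ↔ True :=
    fun τ => iff_true_intro fun i hi => absurd i.isLt (by omega)
  have hnum : ∀ (f : Fin h.length → A × E) x,
      ExtendsH (h ++ [(a, e)]) (Fin.snoc f x : Fin (h.length + 1) → A × E) ↔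
        List.ofFn f = h ∧ x = (a, e) := by
    intro f x
    rw [ExtendsH, List.ofFn_snoc, List.take_of_length_le (by simp)]
    simp
  have hden : ∀ (f : Fin h.length → A × E) x,
      ExtendsH h (Fin.snoc f x : Fin (h.length + 1) → A × E) ∧
        ActAt h.length a (Fin.snoc f x : Fin (h.length + 1) → A × E) ↔
        List.ofFn f = h ∧ x.1 = a := by
    intro f x
    have hlast : ∀ hk, (⟨h.length, hk⟩ : Fin (h.length + 1)) = Fin.last _ := fun _ => rfl
    rw [ExtendsH, ActAt, List.ofFn_snoc, List.take_left' List.length_ofFn]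
    simp [hlast]
  rw [condPevA, condE, evP_eq_sum_snoc, evP_eq_sum_snoc, ← μ.sum_probH_append_singleton (by omega)]
  classical
  simp only [hfollows, and_true, hnum, hden, ite_and, List.ofFn_eq_iff_eq_getElem,
    Fintype.sum_ite_eq', Fin.getElem_fin, List.ofFn_getElem, Fintype.sum_prod_type]
  rw [Fintype.sum_eq_single a fun b hb => Finset.sum_eq_zero fun _ _ => if_neg hb]
  exact congrArg _ (Finset.sum_congr rfl fun _ _ => if_pos rfl)

theorem VpevA_one_eq_VaevA_one_of_length_succ {h : List (A × E)} (hm : h.length + 1 = m)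
    (u : E → ℝ) (π : List (A × E) → A) (a : A) :
    μ.VpevA u π 1 h a = μ.VaevA u π 1 h a := by
  simp only [VpevA, VaevA, μ.condPevA_eq_condE_of_length_succ hm]

end Env

theorem LSt.sum_univ {M : Type*} [AddCommMonoid M] (f : LSt → M) :
    ∑ s, f s = f LSt.E + f LSt.F := by
  rw [show (Finset.univ : Finset LSt) = {LSt.E, LSt.F} from rfl,
    Finset.sum_insert (by decide), Finset.sum_singleton]

theorem LPer.sum_univ {M : Type*} [AddCommMonoid M] (f : LPer → M) : ∑ e, f e =
    f LPer.pE + f LPer.pF + f LPer.p0 + f LPer.O0 + f LPer.OT + f LPer.OM + f LPer.OMT := by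
  rw [show (Finset.univ : Finset LPer) =
      {LPer.pE, LPer.pF, LPer.p0, LPer.O0, LPer.OT, LPer.OM, LPer.OMT} from rfl]
  simp only [Finset.sum_insert, Finset.mem_insert, Finset.mem_singleton, reduceCtorEq, or_self,
    not_false_eq_true, Finset.sum_singleton]
  abel

theorem nlEnv_sum_pe_mul_nlU (s : LSt) (c : LAct × LPer) (a : LAct) :
    ∑ e, nlEnv.pe s [c] a e * nlU e =
      (if s = LSt.F then 1000000 else 0) + (if a = LAct.B₂ then 1000 else 0) := by
  cases s <;> cases a <;> norm_num +decide [LPer.sum_univ, nlEnv, nlPe, nlU]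

theorem nlEnv_hw_singleton (s : LSt) (a : LAct) (e : LPer) :
    nlEnv.hw s [(a, e)] = nlPe s [] a e / 4 := by
  simp only [Env.hw, wSuf, nlEnv, nlPa]
  ring

theorem nlEnv_condS_look_pE (s : LSt) :
    nlEnv.condS s [(LAct.B₁, LPer.pE)] = if s = LSt.E then 1 else 0 := by
  cases s <;> simp [Env.condS, Env.probH, LSt.sum_univ, nlEnv_hw_singleton, nlPe]

theorem nlEnv_condS_look_pF (s : LSt) :
    nlEnv.condS s [(LAct.B₁, LPer.pF)] = if s = LSt.F then 1 else 0 := by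
  cases s <;> simp [Env.condS, Env.probH, LSt.sum_univ, nlEnv_hw_singleton, nlPe]

theorem nlEnv_condS_not_look (s : LSt) : nlEnv.condS s [(LAct.B₂, LPer.p0)] = 1 / 2 := by
  rw [Env.condS, Env.probH, LSt.sum_univ]
  cases s <;> norm_num [nlEnv_hw_singleton, nlPe]

theorem nlEnv_VcauA_one (π : List (LAct × LPer) → LAct) (c : LAct × LPer) (a : LAct) :
    nlEnv.VcauA nlU π 1 [c] a = ∑ s, nlEnv.condS s [c] *
      ((if s = LSt.F then 1000000 else 0) + (if a = LAct.B₂ then 1000 else 0)) := by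
  simp only [nlEnv.VcauA_one (h := [c]) (by simp), nlEnv_sum_pe_mul_nlU]

theorem nlEnv_VcauA_one_look_pE (π : List (LAct × LPer) → LAct) (a : LAct) :
    nlEnv.VcauA nlU π 1 [(LAct.B₁, LPer.pE)] a = if a = LAct.B₂ then 1000 else 0 := by
  simp [nlEnv_VcauA_one, nlEnv_condS_look_pE]

theorem nlEnv_VcauA_one_look_pF (π : List (LAct × LPer) → LAct) (a : LAct) :
    nlEnv.VcauA nlU π 1 [(LAct.B₁, LPer.pF)] a = 1000000 + if a = LAct.B₂ then 1000 else 0 := by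
  simp [nlEnv_VcauA_one, nlEnv_condS_look_pF]

theorem nlEnv_VcauA_one_not_look (π : List (LAct × LPer) → LAct) (a : LAct) :
    nlEnv.VcauA nlU π 1 [(LAct.B₂, LPer.p0)] a = 500000 + if a = LAct.B₂ then 1000 else 0 := by
  cases a <;> norm_num +decide [nlEnv_VcauA_one, nlEnv_condS_not_look, LSt.sum_univ]

theorem nlEnv_condDo_nil (a : LAct) (e : LPer) :
    nlEnv.condDo [] a e = (nlPe LSt.E [] a e + nlPe LSt.F [] a e) / 2 := by
  rw [nlEnv.condDo_eq_sum_condS_mul_pe (by simp), LSt.sum_univ]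
  simp only [Env.condS, Env.probH, LSt.sum_univ, Env.hw, wSuf, nlEnv]
  ring

theorem nlEnv_Vcau_two (π : List (LAct × LPer) → LAct) :
    nlEnv.Vcau nlU π 2 [] =
      if π [] = LAct.B₁ then
        (nlEnv.VcauA nlU π 1 [(LAct.B₁, LPer.pE)] (π [(LAct.B₁, LPer.pE)]) +
          nlEnv.VcauA nlU π 1 [(LAct.B₁, LPer.pF)] (π [(LAct.B₁, LPer.pF)])) / 2
      else nlEnv.VcauA nlU π 1 [(LAct.B₂, LPer.p0)] (π [(LAct.B₂, LPer.p0)]) := by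
  rw [Env.Vcau, Env.VcauA]
  cases π [] <;> simp [LPer.sum_univ, nlEnv_condDo_nil, nlPe, nlU]
  ring

theorem nlEnv_VaevA_one_look_pE (π : List (LAct × LPer) → LAct) (a : LAct) :
    nlEnv.VaevA nlU π 1 [(LAct.B₁, LPer.pE)] a = if a = LAct.B₂ then 1000 else 0 := by
  have hF : ∀ s ≠ LSt.E, nlEnv.hw s [(LAct.B₁, LPer.pE)] = 0 := by
    intro s hs
    cases s
    · contradiction
    · simp [nlEnv_hw_singleton, nlPe]
  have hE : nlEnv.hw LSt.E [(LAct.B₁, LPer.pE)] * nlEnv.pa LSt.E [(LAct.B₁, LPer.pE)] a ≠ 0 := by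
    rw [nlEnv_hw_singleton]
    cases a <;> norm_num [nlEnv, nlPe, nlPa]
  rw [nlEnv.VaevA_one_eq_of_hw_eq_zero hF hE, nlEnv_sum_pe_mul_nlU]
  simp +decide

theorem nlEnv_VaevA_one_look_pF (π : List (LAct × LPer) → LAct) (a : LAct) :
    nlEnv.VaevA nlU π 1 [(LAct.B₁, LPer.pF)] a = 1000000 + if a = LAct.B₂ then 1000 else 0 := by
  have hE : ∀ s ≠ LSt.F, nlEnv.hw s [(LAct.B₁, LPer.pF)] = 0 := by
    intro s hs
    cases s
    · simp [nlEnv_hw_singleton, nlPe]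
    · contradiction
  have hF : nlEnv.hw LSt.F [(LAct.B₁, LPer.pF)] * nlEnv.pa LSt.F [(LAct.B₁, LPer.pF)] a ≠ 0 := by
    rw [nlEnv_hw_singleton]
    cases a <;> norm_num [nlEnv, nlPe, nlPa]
  rw [nlEnv.VaevA_one_eq_of_hw_eq_zero hE hF, nlEnv_sum_pe_mul_nlU]
  simp

/-- **Newcomb with looking, causal values and time consistency** (ε = 0.01):
(i) from the empty history, the causal values of the six policies (curious one-boxer,
curious two-boxer, incurious one-boxer, incurious two-boxer, paradox-lover, fatalistic)
are 500000, 501000, 500000, 501000, 500500, 500500, so both two-boxing policies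
maximize the causal value; (ii) after looking into the box, evidential agents two-box:
`V^{aev,B₂}_{μ,1}(LF) = 1001000 > 1000000 = V^{aev,B₁}_{μ,1}(LF)` and
`V^{aev,B₂}_{μ,1}(LE) = 1000 > 0 = V^{aev,B₁}_{μ,1}(LE)`, so the curious one-boxer is
not a time-consistent policy for SAEDT or SPEDT. -/
theorem newcomb_with_looking_causal_and_time_consistency :
    (nlEnv.Vcau nlU nlCur1 2 [] = 500000 ∧
     nlEnv.Vcau nlU nlCur2 2 [] = 501000 ∧
     nlEnv.Vcau nlU nlInc1 2 [] = 500000 ∧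
     nlEnv.Vcau nlU nlInc2 2 [] = 501000 ∧
     nlEnv.Vcau nlU nlPara 2 [] = 500500 ∧
     nlEnv.Vcau nlU nlFatal 2 [] = 500500) ∧
    (nlEnv.Vcau nlU nlCur2 2 [] = nlEnv.Vcau nlU nlInc2 2 [] ∧
     nlEnv.Vcau nlU nlCur1 2 [] < nlEnv.Vcau nlU nlCur2 2 [] ∧
     nlEnv.Vcau nlU nlInc1 2 [] < nlEnv.Vcau nlU nlCur2 2 [] ∧
     nlEnv.Vcau nlU nlPara 2 [] < nlEnv.Vcau nlU nlCur2 2 [] ∧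
     nlEnv.Vcau nlU nlFatal 2 [] < nlEnv.Vcau nlU nlCur2 2 []) ∧
    (∀ π : List (LAct × LPer) → LAct,
      nlEnv.VaevA nlU π 1 [(LAct.B₁, LPer.pF)] LAct.B₁ = 1000000 ∧
      nlEnv.VaevA nlU π 1 [(LAct.B₁, LPer.pF)] LAct.B₂ = 1001000 ∧
      nlEnv.VaevA nlU π 1 [(LAct.B₁, LPer.pE)] LAct.B₁ = 0 ∧
      nlEnv.VaevA nlU π 1 [(LAct.B₁, LPer.pE)] LAct.B₂ = 1000 ∧
      nlEnv.VaevA nlU π 1 [(LAct.B₁, LPer.pF)] LAct.B₁ <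
        nlEnv.VaevA nlU π 1 [(LAct.B₁, LPer.pF)] LAct.B₂ ∧
      nlEnv.VaevA nlU π 1 [(LAct.B₁, LPer.pE)] LAct.B₁ <
        nlEnv.VaevA nlU π 1 [(LAct.B₁, LPer.pE)] LAct.B₂) ∧
    ¬ (∀ (h : List (LAct × LPer)), h.length < 2 → ∀ a : LAct,
        nlEnv.VaevA nlU nlCur1 (2 - h.length) h a ≤
          nlEnv.VaevA nlU nlCur1 (2 - h.length) h (nlCur1 h)) ∧
    ¬ (∀ (h : List (LAct × LPer)), h.length < 2 → ∀ a : LAct,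
        nlEnv.VpevA nlU nlCur1 (2 - h.length) h a ≤
          nlEnv.VpevA nlU nlCur1 (2 - h.length) h (nlCur1 h)) := by
  have hcau : nlEnv.Vcau nlU nlCur1 2 [] = 500000 ∧ nlEnv.Vcau nlU nlCur2 2 [] = 501000 ∧
      nlEnv.Vcau nlU nlInc1 2 [] = 500000 ∧ nlEnv.Vcau nlU nlInc2 2 [] = 501000 ∧
      nlEnv.Vcau nlU nlPara 2 [] = 500500 ∧ nlEnv.Vcau nlU nlFatal 2 [] = 500500 := by
    refine ⟨?_, ?_, ?_, ?_, ?_, ?_⟩ <;>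
      norm_num +decide [nlEnv_Vcau_two, nlEnv_VcauA_one_look_pE, nlEnv_VcauA_one_look_pF,
        nlEnv_VcauA_one_not_look, nlCur1, nlCur2, nlInc1, nlInc2, nlPara, nlFatal]
  obtain ⟨hcur1, hcur2, hinc1, hinc2, hpara, hfatal⟩ := hcau
  refine ⟨⟨hcur1, hcur2, hinc1, hinc2, hpara, hfatal⟩, ?_, fun π => ?_, ?_, ?_⟩
  · norm_num [hcur1, hcur2, hinc1, hinc2, hpara, hfatal]
  · norm_num +decide [nlEnv_VaevA_one_look_pE, nlEnv_VaevA_one_look_pF]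
  · intro hconsistent
    have hle : nlEnv.VaevA nlU nlCur1 1 [(LAct.B₁, LPer.pF)] LAct.B₂ ≤
        nlEnv.VaevA nlU nlCur1 1 [(LAct.B₁, LPer.pF)] LAct.B₁ :=
      hconsistent [(LAct.B₁, LPer.pF)] (by simp) LAct.B₂
    norm_num +decide [nlEnv_VaevA_one_look_pF] at hle
  · intro hconsistent
    have hle : nlEnv.VpevA nlU nlCur1 1 [(LAct.B₁, LPer.pF)] LAct.B₂ ≤
        nlEnv.VpevA nlU nlCur1 1 [(LAct.B₁, LPer.pF)] LAct.B₁ :=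
      hconsistent [(LAct.B₁, LPer.pF)] (by simp) LAct.B₂
    simp only [nlEnv.VpevA_one_eq_VaevA_one_of_length_succ (h := [(LAct.B₁, LPer.pF)]) rfl] at hle
    norm_num +decide [nlEnv_VaevA_one_look_pF] at hle
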